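/- Unbalanced type α dynamics on the projective plane (Lemma 2.7, diagonal case): Let a_n = diag(1, β_n, γ_n) ∈ GL(3,ℝ) with 0 < γ_n ≤ β_n ≤ 1 for all n, β_n → 0 and γ_n/β_n → λ for some λ ∈ (0,1], acting on ℝP². Then: (1) for every p = [x:y:z] ∈ ℝP² with x ≠ 0, the dynamic set D_{(a_n)}(p) equals {[e₁]}; (2) for every p = [0:y:z] ∈ ℝP², D_{(a_n)}(p) equals the projective line through [e₁] and [0 : y : λz], i.e. the set {[s : t·y : t·λ·z] : (s,t) ∈ ℝ² \ {(0,0)}}. -/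

import Mathlib

open Matrix Filter Topology Set

noncomputable section

/-- `V3` is `ℝ³`. -/
abbrev V3 : Type := Fin 3 → ℝ

/-- The group `GL(3,ℝ)` of invertible `3 × 3` real matrices. -/
abbrev GL3 : Type := (Matrix (Fin 3) (Fin 3) ℝ)ˣ

/-- Nonzero vectors of `ℝ³` up to a nonzero scalar. -/
def projSetoid : Setoid {v : V3 // v ≠ 0} where
  r v w := ∃ c : ℝ, c ≠ 0 ∧ w.1 = c • v.1
  iseqv := by
    refine ⟨fun v => ⟨1, one_ne_zero, (one_smul ℝ v.1).symm⟩, ?_, ?_⟩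
    · rintro v w ⟨c, hc, h⟩
      exact ⟨c⁻¹, inv_ne_zero hc, by rw [h, smul_smul, inv_mul_cancel₀ hc, one_smul]⟩
    · rintro u v w ⟨c, hc, h⟩ ⟨d, hd, h'⟩
      exact ⟨d * c, mul_ne_zero hd hc, by rw [h', h, smul_smul]⟩

/-- The real projective plane `ℝP²`, as the quotient of `ℝ³ \ {0}` by nonzero scalings,
with the quotient topology.  (We use the same model for the dual projective plane `ℝP²*`,
a class `[f₁ : f₂ : f₃]*` of linear forms being recorded through its coefficient
vector `(f₁, f₂, f₃)`; the form acts on vectors by the dot product.) -/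
def RP2 : Type := Quotient projSetoid

/-- The projective class `[v]` of a nonzero vector. -/
def RP2.mk (v : V3) (hv : v ≠ 0) : RP2 := Quotient.mk projSetoid ⟨v, hv⟩

instance : TopologicalSpace RP2 :=
  inferInstanceAs (TopologicalSpace (Quotient projSetoid))

lemma RP2.ind {P : RP2 → Prop} (h : ∀ (v : V3) (hv : v ≠ 0), P (RP2.mk v hv)) (p : RP2) : P p := by
  refine Quotient.ind (fun a => ?_) p
  exact h a.1 a.2

lemma RP2.mk_eq_mk_iff {v w : V3} {hv : v ≠ 0} {hw : w ≠ 0} :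
    RP2.mk v hv = RP2.mk w hw ↔ ∃ c : ℝ, c ≠ 0 ∧ w = c • v :=
  ⟨fun h => Quotient.exact h, fun h => Quotient.sound h⟩

lemma ne_zero_of_coord {v : V3} (i : Fin 3) (h : v i ≠ 0) : v ≠ 0 :=
  fun h0 => h (by rw [h0]; rfl)

/-- The projective class of a vector, defaulting to `[e₁]` for the zero vector. -/
def RP2.mk' (v : V3) : RP2 :=
  if h : v = 0 then RP2.mk ![1, 0, 0] (ne_zero_of_coord 0 (by simp)) else RP2.mk v h

lemma e1_ne : (![1, 0, 0] : V3) ≠ 0 := ne_zero_of_coord 0 (by norm_num)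

lemma e3_ne : (![0, 0, 1] : V3) ≠ 0 := ne_zero_of_coord 2 (by simp)

lemma GL3.mulVec_ne {g : GL3} {v : V3} (hv : v ≠ 0) :
    (g : Matrix (Fin 3) (Fin 3) ℝ) *ᵥ v ≠ 0 := by
  intro h
  apply hv
  have h2 : ((g⁻¹ : GL3) : Matrix (Fin 3) (Fin 3) ℝ) *ᵥ
      ((g : Matrix (Fin 3) (Fin 3) ℝ) *ᵥ v) = 0 := by rw [h, Matrix.mulVec_zero]
  rwa [Matrix.mulVec_mulVec, Units.inv_mul, Matrix.one_mulVec] at h2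

/-- The action of `g ∈ GL(3,ℝ)` on `ℝP²`, `g · [v] = [g v]`. -/
def RP2.mapMat (g : GL3) : RP2 → RP2 :=
  Quotient.lift
    (fun a : {v : V3 // v ≠ 0} =>
      RP2.mk ((g : Matrix (Fin 3) (Fin 3) ℝ) *ᵥ a.1) (GL3.mulVec_ne a.2))
    (by
      rintro a b ⟨c, hc, h⟩
      apply Quotient.sound
      refine ⟨c, hc, ?_⟩
      show (g : Matrix (Fin 3) (Fin 3) ℝ) *ᵥ b.1 = c • ((g : Matrix (Fin 3) (Fin 3) ℝ) *ᵥ a.1)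
      rw [h, Matrix.mulVec_smul])

lemma RP2.mapMat_mk (g : GL3) (v : V3) (hv : v ≠ 0) :
    RP2.mapMat g (RP2.mk v hv) =
      RP2.mk ((g : Matrix (Fin 3) (Fin 3) ℝ) *ᵥ v) (GL3.mulVec_ne hv) := rfl

/-- The element of `GL(3,ℝ)` acting on coefficient vectors of linear forms the way `g`
acts on `ℝP²*`:  the coefficient vector of `f ∘ g⁻¹` is `(g⁻¹)ᵀ` applied to that of `f`. -/
def dualGL (g : GL3) : GL3 where
  val := ((g⁻¹ : GL3) : Matrix (Fin 3) (Fin 3) ℝ)ᵀ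
  inv := ((g : GL3) : Matrix (Fin 3) (Fin 3) ℝ)ᵀ
  val_inv := by rw [← Matrix.transpose_mul, Units.mul_inv, Matrix.transpose_one]
  inv_val := by rw [← Matrix.transpose_mul, Units.inv_mul, Matrix.transpose_one]

/-- The flag space `X`: pairs `([v], [f]) ∈ ℝP² × ℝP²*` with `f(v) = 0`. -/
def FlagSpace : Set (RP2 × RP2) :=
  {x | ∀ (v f : V3) (hv : v ≠ 0) (hf : f ≠ 0),
    x.1 = RP2.mk v hv → x.2 = RP2.mk f hf → f ⬝ᵥ v = 0}

/-- Points of the flag space. -/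
abbrev Flag3 : Type := ↥FlagSpace

lemma mem_flagSpace_mk {v f : V3} (hv : v ≠ 0) (hf : f ≠ 0) (h : f ⬝ᵥ v = 0) :
    (RP2.mk v hv, RP2.mk f hf) ∈ FlagSpace := by
  rintro v' f' hv' hf' hp hq
  obtain ⟨c, hc, hcv⟩ := RP2.mk_eq_mk_iff.1 hp
  obtain ⟨d, hd, hdf⟩ := RP2.mk_eq_mk_iff.1 hq
  rw [hcv, hdf, smul_dotProduct, dotProduct_smul, h]
  simp

lemma dot_invariance (g : GL3) (v f : V3) :
    (((dualGL g : GL3) : Matrix (Fin 3) (Fin 3) ℝ) *ᵥ f) ⬝ᵥ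
      ((g : Matrix (Fin 3) (Fin 3) ℝ) *ᵥ v) = f ⬝ᵥ v := by
  have h1 : ((dualGL g : GL3) : Matrix (Fin 3) (Fin 3) ℝ) *ᵥ f =
      f ᵥ* ((g⁻¹ : GL3) : Matrix (Fin 3) (Fin 3) ℝ) := Matrix.mulVec_transpose _ _
  rw [h1, Matrix.dotProduct_mulVec, Matrix.vecMul_vecMul, Units.inv_mul, Matrix.vecMul_one]

lemma flagPair_mem (g : GL3) {x : RP2 × RP2} (hx : x ∈ FlagSpace) :
    (RP2.mapMat g x.1, RP2.mapMat (dualGL g) x.2) ∈ FlagSpace := by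
  obtain ⟨p, q⟩ := x
  revert hx
  refine Quotient.inductionOn₂ p q ?_
  rintro ⟨v, hv⟩ ⟨f, hf⟩ hx
  have h0 : f ⬝ᵥ v = 0 := hx v f hv hf rfl rfl
  exact mem_flagSpace_mk _ _ (by rw [dot_invariance]; exact h0)

/-- The action of `g ∈ GL(3,ℝ)` on the flag space,
`g · ([v], [f]) = ([g v], [f ∘ g⁻¹])`. -/
def flagMap (g : GL3) (x : Flag3) : Flag3 :=
  ⟨(RP2.mapMat g x.1.1, RP2.mapMat (dualGL g) x.1.2), flagPair_mem g x.2⟩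

/-! ### Composition laws and continuity -/

lemma RP2.mapMat_mapMat (g h : GL3) (p : RP2) :
    RP2.mapMat g (RP2.mapMat h p) = RP2.mapMat (g * h) p := by
  refine Quotient.inductionOn p fun a => ?_
  apply Quotient.sound
  exact ⟨1, one_ne_zero, by simp [Matrix.mulVec_mulVec, Units.val_mul]⟩

lemma RP2.mapMat_one (p : RP2) : RP2.mapMat 1 p = p := by
  refine Quotient.inductionOn p fun a => ?_
  apply Quotient.sound
  exact ⟨1, one_ne_zero, by simp [Matrix.one_mulVec, Units.val_one]⟩

lemma dualGL_mul (g h : GL3) : dualGL (g * h) = dualGL g * dualGL h := by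
  apply Units.ext
  rw [Units.val_mul]
  show (((g * h)⁻¹ : GL3) : Matrix (Fin 3) (Fin 3) ℝ)ᵀ =
    ((g⁻¹ : GL3) : Matrix (Fin 3) (Fin 3) ℝ)ᵀ * ((h⁻¹ : GL3) : Matrix (Fin 3) (Fin 3) ℝ)ᵀ
  rw [_root_.mul_inv_rev, Units.val_mul, Matrix.transpose_mul]

lemma dualGL_one : dualGL (1 : GL3) = 1 := by
  apply Units.ext
  show (((1 : GL3)⁻¹ : GL3) : Matrix (Fin 3) (Fin 3) ℝ)ᵀ = ((1 : GL3) : Matrix (Fin 3) (Fin 3) ℝ)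
  rw [inv_one, Units.val_one, Matrix.transpose_one]

lemma flagMap_flagMap (g h : GL3) (x : Flag3) :
    flagMap g (flagMap h x) = flagMap (g * h) x := by
  apply Subtype.ext
  apply Prod.ext
  · exact RP2.mapMat_mapMat g h x.1.1
  · show RP2.mapMat (dualGL g) (RP2.mapMat (dualGL h) x.1.2) = RP2.mapMat (dualGL (g * h)) x.1.2
    rw [RP2.mapMat_mapMat, dualGL_mul]

lemma flagMap_one (x : Flag3) : flagMap 1 x = x := by
  apply Subtype.ext
  apply Prod.ext
  · exact RP2.mapMat_one x.1.1
  · show RP2.mapMat (dualGL 1) x.1.2 = x.1.2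
    rw [dualGL_one, RP2.mapMat_one]

lemma continuous_mulVec (M : Matrix (Fin 3) (Fin 3) ℝ) :
    Continuous fun v : V3 => M *ᵥ v := by
  have h : (fun v : V3 => M *ᵥ v) = fun v => fun i => ∑ j, M i j * v j := by
    funext v i
    simp [Matrix.mulVec, dotProduct]
  rw [h]
  exact continuous_pi fun i =>
    continuous_finsetSum _ fun j _ => continuous_const.mul (continuous_apply j)

lemma continuous_mapMat (g : GL3) : Continuous (RP2.mapMat g) := by
  apply Continuous.quotient_lift
  exact continuous_quotient_mk'.comp
    (Continuous.subtype_mk ((continuous_mulVec _).comp continuous_subtype_val) _)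

lemma continuous_flagMap (g : GL3) : Continuous (flagMap g) := by
  apply Continuous.subtype_mk
  exact ((continuous_mapMat g).comp (continuous_fst.comp continuous_subtype_val)).prodMk
    ((continuous_mapMat (dualGL g)).comp (continuous_snd.comp continuous_subtype_val))

/-- The action of `g ∈ GL(3,ℝ)` on the flag space, as a homeomorphism. -/
def flagHomeo (g : GL3) : Flag3 ≃ₜ Flag3 where
  toFun := flagMap g
  invFun := flagMap g⁻¹
  left_inv := fun x => by rw [flagMap_flagMap, inv_mul_cancel, flagMap_one]
  right_inv := fun x => by rw [flagMap_flagMap, mul_inv_cancel, flagMap_one]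
  continuous_toFun := continuous_flagMap g
  continuous_invFun := continuous_flagMap g⁻¹

/-- The group of homeomorphisms of a topological space
(with `(f * g) x = f (g x)`). -/
instance homeoGroup (Z : Type*) [TopologicalSpace Z] : Group (Z ≃ₜ Z) where
  mul f g := g.trans f
  one := Homeomorph.refl Z
  inv := Homeomorph.symm
  mul_assoc _ _ _ := Homeomorph.ext fun _ => rfl
  one_mul _ := Homeomorph.ext fun _ => rfl
  mul_one _ := Homeomorph.ext fun _ => rfl
  inv_mul_cancel f := Homeomorph.ext fun x => f.symm_apply_apply x

/-! ### Geometric objects in the flag space -/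

/-- The α-circle of a point `p ∈ ℝP²`: all flags whose point is `p`. -/
def Cα (p : RP2) : Set Flag3 := {x | x.1.1 = p}

/-- The β-circle of the projective line with defining form (class) `q`:
all flags whose plane is `ker q`. -/
def Cβ (q : RP2) : Set Flag3 := {x | x.1.2 = q}

/-- The plane of the flag `x` contains the direction of the vector `u`. -/
def planeContains (x : Flag3) (u : V3) : Prop :=
  ∀ (f : V3) (hf : f ≠ 0), x.1.2 = RP2.mk f hf → f ⬝ᵥ u = 0

/-- The point of the flag `x` lies on the projective line defined by the linear
form of coefficients `w`. -/
def pointOnForm (x : Flag3) (w : V3) : Prop :=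
  ∀ (v : V3) (hv : v ≠ 0), x.1.1 = RP2.mk v hv → w ⬝ᵥ v = 0

/-- The β-circle of the projective line spanned by the (independent) directions of
`u` and `w`: all flags whose plane contains both. -/
def CβSpan (u w : V3) : Set Flag3 := {x | planeContains x u ∧ planeContains x w}

lemma li_ne_zero_0 {v1 v2 v3 : V3} (h : LinearIndependent ℝ ![v1, v2, v3]) : v1 ≠ 0 := by
  have := h.ne_zero 0; simpa using this

lemma li_ne_zero_1 {v1 v2 v3 : V3} (h : LinearIndependent ℝ ![v1, v2, v3]) : v2 ≠ 0 := by
  have := h.ne_zero 1; simpa using this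

lemma li_ne_zero_2 {v1 v2 v3 : V3} (h : LinearIndependent ℝ ![v1, v2, v3]) : v3 ≠ 0 := by
  have := h.ne_zero 2; simpa using this

/-- The repulsive bouquet of circles `B⁻(g) = C_α([v₃]) ∪ C_β(span(v₂,v₃))` of a
loxodromic element with eigenvectors `v₁, v₂, v₃` (eigenvalues in decreasing order
of modulus). -/
def bouquetMinus (v2 v3 : V3) (h3 : v3 ≠ 0) : Set Flag3 :=
  Cα (RP2.mk v3 h3) ∪ CβSpan v2 v3

/-- The attractive bouquet of circles `B⁺(g) = C_α([v₁]) ∪ C_β(span(v₁,v₂))`. -/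
def bouquetPlus (v1 v2 : V3) (h1 : v1 ≠ 0) : Set Flag3 :=
  Cα (RP2.mk v1 h1) ∪ CβSpan v1 v2

/-- The dynamic set of a point `x` under a sequence of maps `g n`: all limits of
`g (n k) (x k)` for a strictly increasing sequence `(n k)` and a sequence `x k → x`. -/
def DynSet {M : Type*} [TopologicalSpace M] (g : ℕ → M → M) (x : M) : Set M :=
  {y | ∃ φ : ℕ → ℕ, StrictMono φ ∧ ∃ u : ℕ → M,
    Tendsto u atTop (𝓝 x) ∧ Tendsto (fun k => g (φ k) (u k)) atTop (𝓝 y)}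

end

/-!
Write `aₙ [r] = [r₀ : βₙ r₁ : γₙ r₂]`. If `r → v` with `v₀ ≠ 0`, this tends to `[e₁]`.
If `v₀ = 0`, the line is the kernel of `f = (0, λ v₂, -v₁)`, and
`(f ⬝ aₙ r)² / |aₙ r|² ≤ (λ v₂ r₁ - v₁ ρₙ r₂)² / (r₁² + ρₙ² r₂²) → 0` with `ρₙ = γₙ / βₙ → λ`,
so every limit lies on the line. Conversely `[s : t v₁ : t λ v₂]` is the limit of the images of
`[s βₙ / t : v₁ : v₂] → [v]`, and `[e₁]` that of the images of `[√βₙ : v₁ : v₂]`.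

Limits in `ℝP²` are handled through `p ↦ proj p`, the orthogonal projection onto the line `p`:
it is continuous and injective (so `ℝP²` is Hausdorff), the functions `p ↦ f ⬝ (proj p f)` vanish
exactly on lines, and convergent sequences in `ℝP²` lift to convergent sequences of representatives.
-/

lemma dotProduct_self_pos {ι : Type*} [Fintype ι] {v : ι → ℝ} (hv : v ≠ 0) : 0 < v ⬝ᵥ v := by
  simpa using dotProduct_self_star_pos_iff.2 hv

namespace RP2

noncomputable def proj : RP2 → Matrix (Fin 3) (Fin 3) ℝ :=
  Quotient.lift (fun a : {v : V3 // v ≠ 0} => (a.1 ⬝ᵥ a.1)⁻¹ • vecMulVec a.1 a.1) (by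
    rintro ⟨v, hv⟩ ⟨w, hw⟩ ⟨c, hc, rfl⟩
    ext i j
    simp only [smul_dotProduct, dotProduct_smul, smul_eq_mul, Matrix.smul_apply, vecMulVec_apply,
      Pi.smul_apply]
    field_simp)

lemma proj_mk (v : V3) (hv : v ≠ 0) : proj (mk v hv) = (v ⬝ᵥ v)⁻¹ • vecMulVec v v := rfl

lemma proj_mk_mulVec (v : V3) (hv : v ≠ 0) (w : V3) :
    proj (mk v hv) *ᵥ w = ((v ⬝ᵥ w) / (v ⬝ᵥ v)) • v := by
  rw [proj_mk, smul_mulVec, vecMulVec_mulVec, op_smul_eq_smul, smul_smul, div_eq_inv_mul]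

lemma proj_mk_mulVec_self (v : V3) (hv : v ≠ 0) : proj (mk v hv) *ᵥ v = v := by
  rw [proj_mk_mulVec, div_self (dotProduct_self_pos hv).ne', one_smul]

lemma dotProduct_proj_mk_mulVec (f w : V3) (hw : w ≠ 0) :
    f ⬝ᵥ (proj (mk w hw) *ᵥ f) = (f ⬝ᵥ w) ^ 2 / (w ⬝ᵥ w) := by
  rw [proj_mk_mulVec, dotProduct_smul, smul_eq_mul, dotProduct_comm w f]
  ring

lemma continuous_proj : Continuous proj := by
  apply Continuous.quotient_lift
  have hv : Continuous fun a : {v : V3 // v ≠ 0} => a.1 := continuous_subtype_val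
  refine Continuous.smul ((hv.dotProduct hv).inv₀ fun a => (dotProduct_self_pos a.2).ne') ?_
  exact hv.matrix_vecMulVec hv

lemma mk_proj_mulVec (p : RP2) (v : V3) (h : proj p *ᵥ v ≠ 0) : mk (proj p *ᵥ v) h = p := by
  induction p using RP2.ind with
  | h w hw =>
    have hw' := h
    rw [proj_mk_mulVec] at hw'
    refine mk_eq_mk_iff.2 ⟨((w ⬝ᵥ v) / (w ⬝ᵥ w))⁻¹, inv_ne_zero (left_ne_zero_of_smul hw'), ?_⟩
    rw [proj_mk_mulVec, smul_smul, inv_mul_cancel₀ (left_ne_zero_of_smul hw'), one_smul]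

lemma proj_injective : Function.Injective proj := by
  intro p q hpq
  induction p using RP2.ind with
  | h w hw =>
    have hq : proj q *ᵥ w ≠ 0 := by rwa [← hpq, proj_mk_mulVec_self]
    rw [← mk_proj_mulVec q w hq]
    exact mk_eq_mk_iff.2 ⟨1, one_ne_zero, by rw [← hpq, proj_mk_mulVec_self, one_smul]⟩

instance : T2Space RP2 := T2Space.of_injective_continuous proj_injective continuous_proj

lemma tendsto_mk {w : ℕ → V3} {z : V3} (hw : ∀ n, w n ≠ 0) (hz : z ≠ 0)
    (h : Tendsto w atTop (𝓝 z)) :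
    Tendsto (fun n => mk (w n) (hw n)) atTop (𝓝 (mk z hz)) :=
  (continuous_quotient_mk'.tendsto _).comp (tendsto_subtype_rng.2 h)

lemma tendsto_mk_of_smul {w : ℕ → V3} {m : ℕ → ℝ} {z : V3} (hw : ∀ n, w n ≠ 0)
    (hm : ∀ n, m n ≠ 0) (hz : z ≠ 0) (h : Tendsto (fun n => m n • w n) atTop (𝓝 z)) :
    Tendsto (fun n => mk (w n) (hw n)) atTop (𝓝 (mk z hz)) := by
  refine (tendsto_mk (fun n => smul_ne_zero (hm n) (hw n)) hz h).congr fun n => ?_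
  exact mk_eq_mk_iff.2
    ⟨(m n)⁻¹, inv_ne_zero (hm n), by rw [smul_smul, inv_mul_cancel₀ (hm n), one_smul]⟩

lemma exists_lift_of_tendsto {u : ℕ → RP2} {v : V3} (hv : v ≠ 0)
    (hu : Tendsto u atTop (𝓝 (mk v hv))) :
    ∃ (r : ℕ → V3) (hr : ∀ k, r k ≠ 0), (∀ k, u k = mk (r k) (hr k)) ∧ Tendsto r atTop (𝓝 v) := by
  classical
  -- near `[v]`, the vector `proj p *ᵥ v` is a representative of `p` close to `v`
  set s : ℕ → V3 := fun k => proj (u k) *ᵥ v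
  have hs : Tendsto s atTop (𝓝 v) := by
    have := ((continuous_proj.matrix_mulVec (continuous_const (y := v))).tendsto (mk v hv)).comp hu
    rwa [Function.comp_def, proj_mk_mulVec_self] at this
  let r k := if h : s k = 0 then ((u k).out : V3) else s k
  have hr k : r k ≠ 0 := by
    by_cases h : s k = 0
    · simpa [r, h] using (u k).out.2
    · simp [r, h]
  refine ⟨r, hr, fun k => ?_, hs.congr' ?_⟩
  · by_cases h : s k = 0
    · simp only [r, h, dif_pos]
      exact (Quotient.out_eq (u k)).symm
    · simp only [r, h, dif_neg, not_false_eq_true]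
      exact (mk_proj_mulVec _ _ h).symm
  · filter_upwards [hs.eventually_ne hv] with k hk
    simp [r, hk]

end RP2

lemma mem_dynSet_mapMat_iff {A : ℕ → GL3} {v : V3} (hv : v ≠ 0) {y : RP2} :
    y ∈ DynSet (fun n => RP2.mapMat (A n)) (RP2.mk v hv) ↔
      ∃ φ : ℕ → ℕ, StrictMono φ ∧ ∃ (r : ℕ → V3) (hr : ∀ k, r k ≠ 0),
        Tendsto r atTop (𝓝 v) ∧
        Tendsto (fun k => RP2.mk ((A (φ k) : Matrix (Fin 3) (Fin 3) ℝ) *ᵥ r k)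
          (GL3.mulVec_ne (hr k))) atTop (𝓝 y) := by
  constructor
  · rintro ⟨φ, hφ, u, hu, hy⟩
    obtain ⟨r, hr, hur, hrv⟩ := RP2.exists_lift_of_tendsto hv hu
    obtain rfl : u = fun k => RP2.mk (r k) (hr k) := funext hur
    exact ⟨φ, hφ, r, hr, hrv, hy⟩
  · rintro ⟨φ, hφ, r, hr, hrv, hy⟩
    exact ⟨φ, hφ, fun k => RP2.mk (r k) (hr k), RP2.tendsto_mk hr hv hrv, hy⟩

lemma diagonal_mulVec_fin_three (a b c : ℝ) (w : V3) :
    Matrix.diagonal ![a, b, c] *ᵥ w = ![a * w 0, b * w 1, c * w 2] := by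
  ext i
  fin_cases i <;> simp [mulVec_diagonal]

lemma apply_one_ne_zero_or_apply_two_ne_zero {v : V3} (hv : v ≠ 0) (hv0 : v 0 = 0) :
    v 1 ≠ 0 ∨ v 2 ≠ 0 := by
  by_contra! h
  exact hv (by ext i; fin_cases i <;> simp [hv0, h.1, h.2])

def lineThroughE1 (b c : ℝ) : Set RP2 :=
  {q | ∃ (s t : ℝ) (h : (![s, t * b, t * c] : V3) ≠ 0), q = RP2.mk ![s, t * b, t * c] h}

lemma mk_mem_lineThroughE1 {b c : ℝ} (hbc : b ≠ 0 ∨ c ≠ 0) {w : V3} (hw : w ≠ 0)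
    (h : c * w 1 = b * w 2) : RP2.mk w hw ∈ lineThroughE1 b c := by
  obtain ⟨t, h1, h2⟩ : ∃ t, w 1 = t * b ∧ w 2 = t * c := by
    rcases hbc with hb | hc
    · exact ⟨w 1 / b, by field_simp, by field_simp; linarith⟩
    · exact ⟨w 2 / c, by field_simp; linarith, by field_simp⟩
  have hw' : ![w 0, t * b, t * c] = w := by
    ext i; fin_cases i <;> simp [h1, h2]
  exact ⟨w 0, t, hw' ▸ hw, RP2.mk_eq_mk_iff.2 ⟨1, one_ne_zero, by rw [one_smul, hw']⟩⟩

section Diagonal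

variable {β γ : ℕ → ℝ} {A : ℕ → GL3} {v : V3}

lemma tendsto_mk_diagonal_of_ne_zero (hβ : Tendsto β atTop (𝓝 0)) (hγ : Tendsto γ atTop (𝓝 0))
    (hA : ∀ n, (A n : Matrix (Fin 3) (Fin 3) ℝ) = Matrix.diagonal ![1, β n, γ n])
    {φ : ℕ → ℕ} (hφ : Tendsto φ atTop atTop) {r : ℕ → V3} (hr : ∀ k, r k ≠ 0)
    (hrv : Tendsto r atTop (𝓝 v)) (hv0 : v 0 ≠ 0) :
    Tendsto (fun k => RP2.mk ((A (φ k) : Matrix (Fin 3) (Fin 3) ℝ) *ᵥ r k)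
      (GL3.mulVec_ne (hr k))) atTop (𝓝 (RP2.mk ![1, 0, 0] e1_ne)) := by
  have hri i : Tendsto (fun k => r k i) atTop (𝓝 (v i)) := tendsto_pi_nhds.1 hrv i
  have hlim : Tendsto (fun k => (v 0)⁻¹ • ((A (φ k) : Matrix (Fin 3) (Fin 3) ℝ) *ᵥ r k))
      atTop (𝓝 ![1, 0, 0]) := by
    simp only [hA, diagonal_mulVec_fin_three]
    convert ((hri 0).matrixVecCons (((hβ.comp hφ).mul (hri 1)).matrixVecCons
      (((hγ.comp hφ).mul (hri 2)).matrixVecCons (tendsto_const_nhds (x := ![]))))).const_smul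
        (v 0)⁻¹ using 1
    · simp
    · congr 1; ext i; fin_cases i <;> simp [hv0]
  exact RP2.tendsto_mk_of_smul _ (fun _ => inv_ne_zero hv0) e1_ne hlim

lemma dynSet_diagonal_of_ne_zero (hβ : Tendsto β atTop (𝓝 0)) (hγ : Tendsto γ atTop (𝓝 0))
    (hA : ∀ n, (A n : Matrix (Fin 3) (Fin 3) ℝ) = Matrix.diagonal ![1, β n, γ n])
    (hv : v ≠ 0) (hv0 : v 0 ≠ 0) :
    DynSet (fun n => RP2.mapMat (A n)) (RP2.mk v hv) = {RP2.mk ![1, 0, 0] e1_ne} := by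
  ext y
  rw [mem_dynSet_mapMat_iff, mem_singleton_iff]
  constructor
  · rintro ⟨φ, hφ, r, hr, hrv, hy⟩
    exact tendsto_nhds_unique hy
      (tendsto_mk_diagonal_of_ne_zero hβ hγ hA hφ.tendsto_atTop hr hrv hv0)
  · rintro rfl
    exact ⟨id, strictMono_id, fun _ => v, fun _ => hv, tendsto_const_nhds,
      tendsto_mk_diagonal_of_ne_zero hβ hγ hA tendsto_id (fun _ => hv) tendsto_const_nhds hv0⟩

lemma mk_mem_dynSet_diagonal_of_tendsto
    (hA : ∀ n, (A n : Matrix (Fin 3) (Fin 3) ℝ) = Matrix.diagonal ![1, β n, γ n])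
    (hv : v ≠ 0) (hv0 : v 0 = 0) {c m : ℕ → ℝ} (hc : Tendsto c atTop (𝓝 0)) (hm : ∀ n, m n ≠ 0)
    {z : V3} (hz : z ≠ 0)
    (hlim : Tendsto (fun n => m n • ![c n, β n * v 1, γ n * v 2]) atTop (𝓝 z)) :
    RP2.mk z hz ∈ DynSet (fun n => RP2.mapMat (A n)) (RP2.mk v hv) := by
  have hr n : ![c n, v 1, v 2] ≠ 0 := by
    rcases apply_one_ne_zero_or_apply_two_ne_zero hv hv0 with h | h
    · exact ne_zero_of_coord 1 h
    · exact ne_zero_of_coord 2 h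
  have hrv : Tendsto (fun n => ![c n, v 1, v 2]) atTop (𝓝 v) := by
    convert hc.matrixVecCons (tendsto_const_nhds (x := ![v 1, v 2])) using 2
    ext i; fin_cases i <;> simp [hv0]
  refine (mem_dynSet_mapMat_iff hv).2
    ⟨id, strictMono_id, _, hr, hrv, RP2.tendsto_mk_of_smul _ hm hz ?_⟩
  simpa [hA, diagonal_mulVec_fin_three] using hlim

lemma lineThroughE1_subset_dynSet_diagonal (hβ0 : ∀ n, 0 < β n) (hβ : Tendsto β atTop (𝓝 0))
    {l : ℝ} (hratio : Tendsto (fun n => γ n / β n) atTop (𝓝 l))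
    (hA : ∀ n, (A n : Matrix (Fin 3) (Fin 3) ℝ) = Matrix.diagonal ![1, β n, γ n])
    (hv : v ≠ 0) (hv0 : v 0 = 0) :
    lineThroughE1 (v 1) (l * v 2) ⊆ DynSet (fun n => RP2.mapMat (A n)) (RP2.mk v hv) := by
  rintro _ ⟨s, t, hst, rfl⟩
  by_cases ht : t = 0
  · subst ht
    have hs : s ≠ 0 := by rintro rfl; exact hst (by ext i; fin_cases i <;> simp)
    have hsq : Tendsto (fun n => √(β n)) atTop (𝓝 0) := by simpa using hβ.sqrt
    have hsq0 n : √(β n) ≠ 0 := (Real.sqrt_pos.2 (hβ0 n)).ne'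
    refine mk_mem_dynSet_diagonal_of_tendsto hA hv hv0 hsq
      (fun n => div_ne_zero hs (hsq0 n)) hst ?_
    convert (tendsto_const_nhds (x := s)).matrixVecCons
      (((hsq.const_mul s).mul_const (v 1)).matrixVecCons
        ((((hratio.const_mul s).mul hsq).mul_const (v 2)).matrixVecCons
          (tendsto_const_nhds (x := ![])))) using 1
    · ext n i
      have hq0 := hsq0 n
      have hb : √(β n) ^ 2 = β n := Real.sq_sqrt (hβ0 n).le
      generalize √(β n) = q at hq0 hb ⊢
      rw [← hb]
      fin_cases i <;> simp <;> field_simp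
    · congr 1; ext i; fin_cases i <;> simp
  · refine mk_mem_dynSet_diagonal_of_tendsto hA hv hv0 (c := fun n => s / t * β n)
      (by simpa using hβ.const_mul (s / t)) (fun n => div_ne_zero ht (hβ0 n).ne') hst ?_
    convert tendsto_const_nhds.matrixVecCons (tendsto_const_nhds.matrixVecCons
      (((hratio.mul_const (v 2)).const_mul t).matrixVecCons (tendsto_const_nhds (x := ![]))))
      using 1
    ext n i
    fin_cases i <;> simp <;> field_simp [ht, (hβ0 n).ne']

lemma sq_mul_div_add_le_div {a b N D : ℝ} (ha : 0 ≤ a) (hb : b ≠ 0) (hN : 0 ≤ N) (hD : 0 < D) :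
    b ^ 2 * N / (a + b ^ 2 * D) ≤ N / D := by
  rw [div_le_div_iff₀ (by positivity) hD]
  nlinarith [mul_nonneg hN ha]

lemma tendsto_dotProduct_proj_diagonal (hβ0 : ∀ n, β n ≠ 0) {l : ℝ} (hl0 : 0 < l)
    (hratio : Tendsto (fun n => γ n / β n) atTop (𝓝 l))
    (hA : ∀ n, (A n : Matrix (Fin 3) (Fin 3) ℝ) = Matrix.diagonal ![1, β n, γ n])
    (hv : v ≠ 0) (hv0 : v 0 = 0) {φ : ℕ → ℕ} (hφ : Tendsto φ atTop atTop) {r : ℕ → V3}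
    (hr : ∀ k, r k ≠ 0) (hrv : Tendsto r atTop (𝓝 v)) :
    Tendsto (fun k => ![0, l * v 2, -v 1] ⬝ᵥ (RP2.proj (RP2.mk
      ((A (φ k) : Matrix (Fin 3) (Fin 3) ℝ) *ᵥ r k) (GL3.mulVec_ne (hr k))) *ᵥ
        ![0, l * v 2, -v 1])) atTop (𝓝 0) := by
  set ρ := fun k => γ (φ k) / β (φ k)
  have hρ : Tendsto ρ atTop (𝓝 l) := hratio.comp hφ
  have hri i : Tendsto (fun k => r k i) atTop (𝓝 (v i)) := tendsto_pi_nhds.1 hrv i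
  set N := fun k => (l * v 2 * r k 1 - v 1 * ρ k * r k 2) ^ 2
  set D := fun k => r k 1 ^ 2 + ρ k ^ 2 * r k 2 ^ 2
  have hD0 : 0 < v 1 ^ 2 + l ^ 2 * v 2 ^ 2 := by
    rcases apply_one_ne_zero_or_apply_two_ne_zero hv hv0 with h | h <;> positivity
  have hN : Tendsto N atTop (𝓝 0) := by
    have := (((hri 1).const_mul (l * v 2)).sub ((hρ.const_mul (v 1)).mul (hri 2))).pow 2
    convert this using 2
    ring
  have hD : Tendsto D atTop (𝓝 (v 1 ^ 2 + l ^ 2 * v 2 ^ 2)) :=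
    ((hri 1).pow 2).add ((hρ.pow 2).mul ((hri 2).pow 2))
  refine squeeze_zero' (Eventually.of_forall fun k => ?_) ?_ (by simpa using hN.div hD hD0.ne')
  · rw [RP2.dotProduct_proj_mk_mulVec]
    exact div_nonneg (sq_nonneg _) (dotProduct_self_pos (GL3.mulVec_ne (hr k))).le
  · filter_upwards [hD.eventually (lt_mem_nhds hD0)] with k hk
    have hβk := hβ0 (φ k)
    calc _ = β (φ k) ^ 2 * N k / (r k 0 ^ 2 + β (φ k) ^ 2 * D k) := by
          simp only [RP2.dotProduct_proj_mk_mulVec, hA, diagonal_mulVec_fin_three, N, D, ρ]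
          simp [dotProduct, Fin.sum_univ_three]
          field_simp
          ring
      _ ≤ N k / D k := sq_mul_div_add_le_div (sq_nonneg _) hβk (sq_nonneg _) hk

lemma dynSet_diagonal_subset_lineThroughE1 (hβ0 : ∀ n, β n ≠ 0) {l : ℝ} (hl0 : 0 < l)
    (hratio : Tendsto (fun n => γ n / β n) atTop (𝓝 l))
    (hA : ∀ n, (A n : Matrix (Fin 3) (Fin 3) ℝ) = Matrix.diagonal ![1, β n, γ n])
    (hv : v ≠ 0) (hv0 : v 0 = 0) :
    DynSet (fun n => RP2.mapMat (A n)) (RP2.mk v hv) ⊆ lineThroughE1 (v 1) (l * v 2) := by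
  intro y hy
  obtain ⟨φ, hφ, r, hr, hrv, hy⟩ := (mem_dynSet_mapMat_iff hv).1 hy
  set f : V3 := ![0, l * v 2, -v 1]
  have hfy : f ⬝ᵥ (RP2.proj y *ᵥ f) = 0 :=
    tendsto_nhds_unique (((continuous_const.dotProduct
      (RP2.continuous_proj.matrix_mulVec continuous_const)).tendsto y).comp hy)
      (tendsto_dotProduct_proj_diagonal hβ0 hl0 hratio hA hv hv0 hφ.tendsto_atTop hr hrv)
  induction y using RP2.ind with
  | h w hw =>
    rw [RP2.dotProduct_proj_mk_mulVec, div_eq_zero_iff,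
      or_iff_left (dotProduct_self_pos hw).ne', pow_eq_zero_iff two_ne_zero] at hfy
    refine mk_mem_lineThroughE1 ?_ hw ?_
    · exact (apply_one_ne_zero_or_apply_two_ne_zero hv hv0).imp id (mul_ne_zero hl0.ne')
    · simp [f, dotProduct, Fin.sum_univ_three] at hfy
      linarith

end Diagonal

theorem unbalanced_alpha_rp2_dynamics_general
    (β γ : ℕ → ℝ) (hpos : ∀ n, 0 < γ n ∧ γ n ≤ β n ∧ β n ≤ 1)
    (hβ : Filter.Tendsto β Filter.atTop (nhds 0)) (l : ℝ) (hl0 : 0 < l)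
    (hratio : Filter.Tendsto (fun n => γ n / β n) Filter.atTop (nhds l))
    (A : ℕ → GL3)
    (hA : ∀ n, (A n : Matrix (Fin 3) (Fin 3) ℝ) = Matrix.diagonal ![1, β n, γ n]) :
    (∀ (v : V3) (hv : v ≠ 0), v 0 ≠ 0 →
      DynSet (fun n => RP2.mapMat (A n)) (RP2.mk v hv) = {RP2.mk ![1, 0, 0] e1_ne}) ∧
    (∀ (v : V3) (hv : v ≠ 0), v 0 = 0 →
      DynSet (fun n => RP2.mapMat (A n)) (RP2.mk v hv) =
        {q : RP2 | ∃ (s t : ℝ) (h : (![s, t * v 1, t * (l * v 2)] : V3) ≠ 0),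
          q = RP2.mk ![s, t * v 1, t * (l * v 2)] h}) := by
  have hβ0 n : 0 < β n := (hpos n).1.trans_le (hpos n).2.1
  have hγ : Tendsto γ atTop (𝓝 0) := by
    simpa using (hratio.mul hβ).congr fun n => div_mul_cancel₀ (γ n) (hβ0 n).ne'
  refine ⟨fun v hv hv0 => dynSet_diagonal_of_ne_zero hβ hγ hA hv hv0, fun v hv hv0 => ?_⟩
  exact (dynSet_diagonal_subset_lineThroughE1 (fun n => (hβ0 n).ne') hl0 hratio hA hv hv0).antisymm
    (lineThroughE1_subset_dynSet_diagonal hβ0 hβ hratio hA hv hv0)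

/-- Lemma 2.7 (unbalanced type α dynamics on the projective plane, diagonal case). -/
theorem unbalanced_alpha_rp2_dynamics
    (β γ : ℕ → ℝ) (hpos : ∀ n, 0 < γ n ∧ γ n ≤ β n ∧ β n ≤ 1)
    (hβ : Filter.Tendsto β Filter.atTop (nhds 0)) (l : ℝ) (hl0 : 0 < l) (hl1 : l ≤ 1)
    (hratio : Filter.Tendsto (fun n => γ n / β n) Filter.atTop (nhds l))
    (A : ℕ → GL3)
    (hA : ∀ n, (A n : Matrix (Fin 3) (Fin 3) ℝ) = Matrix.diagonal ![1, β n, γ n]) :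
    (∀ (v : V3) (hv : v ≠ 0), v 0 ≠ 0 →
      DynSet (fun n => RP2.mapMat (A n)) (RP2.mk v hv) = {RP2.mk ![1, 0, 0] e1_ne}) ∧
    (∀ (v : V3) (hv : v ≠ 0), v 0 = 0 →
      DynSet (fun n => RP2.mapMat (A n)) (RP2.mk v hv) =
        {q : RP2 | ∃ (s t : ℝ) (h : (![s, t * v 1, t * (l * v 2)] : V3) ≠ 0),
          q = RP2.mk ![s, t * v 1, t * (l * v 2)] h}) :=
  unbalanced_alpha_rp2_dynamics_general β γ hpos hβ l hl0 hratio A hA
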